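/- arXiv:2008.04767 — 4 statements merged into one kernel-verified Lean document; each statement's English description precedes it below -/
import Mathlib

section
/- Let I ⊆ ℝ be a nonempty open interval, a ∈ ℝ, σ ∈ {−1, 1}, and b : I → ℝ twice differentiable such that for all t ∈ I one has a⁴ + b(t)² > 0 and −2(a⁴ + b(t)²) + a·b′(t) ≠ 0. Define k̄₁(t) = σ·(−2(a⁴ + b(t)²) + a·b′(t)) / (2·√(a⁴ + b(t)²)) and k̄₂(t) = σ·[(a⁴ + b(t)²)·(8·b(t)·b″(t) + 20·a³·b′(t) − 8·a⁶ − 8·a²·b(t)²) − a·b′(t)³ − 2·(3·a⁴ + 7·b(t)²)·b′(t)²] / (4·√(a⁴ + b(t)²)·(−2·(a⁴ + b(t)²) + a·b′(t))²). Then k̄₁ and k̄₂ are both constant on I if and only if b is constant on I. Moreover, if b is constant with value b₀, then k̄₁(t) = −σ·√(a⁴ + b₀²) and k̄₂(t) = −σ·a²/(2·√(a⁴ + b₀²)) for all t ∈ I. -/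
/-!
Write `s = √(a⁴ + b²)`. Constancy of `k̄₁ = c₁` says `a b' - 2 s² = 2 c s` with `c = σ c₁`, and
`c ≠ 0` by the non-geodesic condition. Differentiating the square of this relation expresses
`a² b''` through `b`, `s`, `c`; substituting into `a²` times the numerator of `k̄₂` shows that
constancy of `k̄₂` makes `(5 s + 3 c)²` constant. On an interval a continuous function with
constant square is constant, so `s`, then `b²`, then `b` are constant. Conversely, for constant
`b` the derivatives vanish and the values follow by substitution.
-/

open Set

theorem IsPreconnected.exists_forall_eq_of_sq_eq {α 𝕜 : Type*} [TopologicalSpace α]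
    [TopologicalSpace 𝕜] [T1Space 𝕜] [CommRing 𝕜] [NoZeroDivisors 𝕜] {S : Set α} {f : α → 𝕜}
    {d : 𝕜} (hS : IsPreconnected S) (hf : ContinuousOn f S) (hsq : ∀ x ∈ S, f x ^ 2 = d) :
    ∃ y, ∀ x ∈ S, f x = y := by
  rcases S.eq_empty_or_nonempty with rfl | ⟨x₀, hx₀⟩
  · exact ⟨0, fun _ => False.elim⟩
  have hmaps : MapsTo f S {f x₀, -f x₀} := fun x hx =>
    eq_or_eq_neg_of_sq_eq_sq _ _ ((hsq x hx).trans (hsq x₀ hx₀).symm)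
  exact ⟨f x₀, fun x hx => hS.constant_of_mapsTo (toFinite _).isDiscrete hf hmaps hx hx₀⟩

theorem HasDerivAt.eq_zero_of_eqOn_const {𝕜 F : Type*} [NontriviallyNormedField 𝕜]
    [NormedAddCommGroup F] [NormedSpace 𝕜 F] {f : 𝕜 → F} {f' c : F} {U : Set 𝕜} {x : 𝕜}
    (h : HasDerivAt f f' x) (hU : IsOpen U) (hx : x ∈ U) (hf : ∀ y ∈ U, f y = c) : f' = 0 :=
  h.unique <| (hasDerivAt_const x c).congr_of_eventuallyEq <|
    Filter.eventuallyEq_of_mem (hU.mem_nhds hx) hf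

noncomputable section

-- `β`, `β₁`, `β₂` stand for the values of `b`, `b'`, `b''` at a point.
def kbar₁ (σ a β β₁ : ℝ) : ℝ :=
  σ * (-2 * (a ^ 4 + β ^ 2) + a * β₁) / (2 * Real.sqrt (a ^ 4 + β ^ 2))

def kbar₂Num (a β β₁ β₂ : ℝ) : ℝ :=
  (a ^ 4 + β ^ 2) * (8 * β * β₂ + 20 * a ^ 3 * β₁ - 8 * a ^ 6 - 8 * a ^ 2 * β ^ 2)
    - a * β₁ ^ 3 - 2 * (3 * a ^ 4 + 7 * β ^ 2) * β₁ ^ 2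

def kbar₂ (σ a β β₁ β₂ : ℝ) : ℝ :=
  σ * kbar₂Num a β β₁ β₂ / (4 * Real.sqrt (a ^ 4 + β ^ 2) * (-2 * (a ^ 4 + β ^ 2) + a * β₁) ^ 2)

end

theorem kbar₁_zero (σ a β : ℝ) : kbar₁ σ a β 0 = -σ * Real.sqrt (a ^ 4 + β ^ 2) :=
  calc kbar₁ σ a β 0 = -σ * ((a ^ 4 + β ^ 2) / Real.sqrt (a ^ 4 + β ^ 2)) := by
        rw [kbar₁]; ring
    _ = -σ * Real.sqrt (a ^ 4 + β ^ 2) := by rw [Real.div_sqrt]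

theorem kbar₂_zero (σ a β : ℝ) :
    kbar₂ σ a β 0 0 = -σ * a ^ 2 / (2 * Real.sqrt (a ^ 4 + β ^ 2)) := by
  rcases (by positivity : 0 ≤ a ^ 4 + β ^ 2).eq_or_lt with hQ | hQ
  · simp [kbar₂, ← hQ]
  · have hs := Real.sqrt_pos.2 hQ
    rw [kbar₂, kbar₂Num]
    field_simp
    ring

theorem sub_eq_mul_sqrt_of_kbar₁_eq {σ a β β₁ c₁ : ℝ} (hσ : σ ^ 2 = 1)
    (hQ : 0 < a ^ 4 + β ^ 2) (h : kbar₁ σ a β β₁ = c₁) :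
    a * β₁ - 2 * (a ^ 4 + β ^ 2) = 2 * (σ * c₁) * Real.sqrt (a ^ 4 + β ^ 2) := by
  have hs := Real.sqrt_pos.2 hQ
  rw [kbar₁, div_eq_iff (by positivity)] at h
  linear_combination σ * h - (a * β₁ - 2 * (a ^ 4 + β ^ 2)) * hσ

theorem sq_relation_differentiated {a c : ℝ} {b b' b'' : ℝ → ℝ} {U : Set ℝ} (hU : IsOpen U)
    (hd1 : ∀ t ∈ U, HasDerivAt b (b' t) t) (hd2 : ∀ t ∈ U, HasDerivAt b' (b'' t) t)
    (h : ∀ t ∈ U, (a * b' t - 2 * (a ^ 4 + b t ^ 2)) ^ 2 = 4 * c ^ 2 * (a ^ 4 + b t ^ 2)) :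
    ∀ t ∈ U, (a * b' t - 2 * (a ^ 4 + b t ^ 2)) * (a * b'' t - 4 * b t * b' t) =
      4 * c ^ 2 * b t * b' t := by
  intro t ht
  have hQ : HasDerivAt (fun u => a ^ 4 + b u * b u) (b' t * b t + b t * b' t) t :=
    ((hd1 t ht).mul (hd1 t ht)).const_add _
  have hF := ((hd2 t ht).const_mul a).sub (hQ.const_mul 2)
  have hg := (hF.mul hF).sub (hQ.const_mul (4 * c ^ 2))
  have h0 := hg.eq_zero_of_eqOn_const hU ht (c := 0) fun u hu => by
    simp only [Pi.sub_apply, Pi.mul_apply]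
    linear_combination h u hu
  simp only [Pi.sub_apply] at h0
  linear_combination h0 / 2

theorem sq_mul_kbar₂Num {a β β₁ β₂ s c : ℝ} (hs : s ^ 2 = a ^ 4 + β ^ 2)
    (hX : a * β₁ = 2 * s * (s + c)) (hY : a ^ 2 * β₂ = 4 * β * (s + c) * (2 * s + c)) :
    a ^ 2 * kbar₂Num a β β₁ β₂ = -8 * c * s ^ 3 * (5 * s ^ 2 + 6 * c * s + c ^ 2 - a ^ 4) := by
  -- after multiplying by `a²`, `β₁` and `β₂` enter only through `a β₁` and `a² β₂`
  have hexp : a ^ 2 * kbar₂Num a β β₁ β₂ =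
      (a ^ 4 + β ^ 2) *
          (8 * β * (a ^ 2 * β₂) + 20 * a ^ 4 * (a * β₁) - 8 * a ^ 4 * (a ^ 4 + β ^ 2))
        - (a * β₁) ^ 3 - 2 * (3 * a ^ 4 + 7 * β ^ 2) * (a * β₁) ^ 2 := by
    rw [kbar₂Num]; ring
  rw [hexp, hX, hY, ← hs]
  linear_combination (24 * c - 8 * s) * s ^ 2 * (s + c) * hs

theorem sq_mul_eq_of_mul_deriv_eq {a β β₁ β₂ s c : ℝ} (hs : s ≠ 0) (hc : c ≠ 0)
    (hP : a * β₁ - 2 * s ^ 2 = 2 * c * s)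
    (hder : (a * β₁ - 2 * s ^ 2) * (a * β₂ - 4 * β * β₁) = 4 * c ^ 2 * β * β₁) :
    a ^ 2 * β₂ = 4 * β * (s + c) * (2 * s + c) := by
  rw [hP] at hder
  have h : s * (a * β₂ - 4 * β * β₁) = 2 * c * β * β₁ :=
    mul_left_cancel₀ (mul_ne_zero two_ne_zero hc) (by linear_combination hder)
  apply mul_left_cancel₀ hs
  linear_combination a * h + (4 * s + 2 * c) * β * hP

theorem sq_five_mul_sqrt_add_eq {σ a β β₁ β₂ c c₂ : ℝ} (hσ : σ ^ 2 = 1)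
    (hQ : 0 < a ^ 4 + β ^ 2) (hng : -2 * (a ^ 4 + β ^ 2) + a * β₁ ≠ 0)
    (hP : a * β₁ - 2 * (a ^ 4 + β ^ 2) = 2 * c * Real.sqrt (a ^ 4 + β ^ 2))
    (hder : (a * β₁ - 2 * (a ^ 4 + β ^ 2)) * (a * β₂ - 4 * β * β₁) = 4 * c ^ 2 * β * β₁)
    (hk : kbar₂ σ a β β₁ β₂ = c₂) :
    (5 * Real.sqrt (a ^ 4 + β ^ 2) + 3 * c) ^ 2 =
      5 * a ^ 4 + 4 * c ^ 2 - 10 * σ * c₂ * c * a ^ 2 := by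
  set s := Real.sqrt (a ^ 4 + β ^ 2)
  have hs : s ^ 2 = a ^ 4 + β ^ 2 := Real.sq_sqrt hQ.le
  have hs0 : 0 < s := Real.sqrt_pos.2 hQ
  have hc : c ≠ 0 := by
    rintro rfl
    exact hng (by linear_combination hP)
  have hN : kbar₂Num a β β₁ β₂ = σ * c₂ * (16 * c ^ 2 * s ^ 3) := by
    rw [kbar₂, (by linear_combination hP : -2 * (a ^ 4 + β ^ 2) + a * β₁ = 2 * c * s),
      div_eq_iff (by positivity)] at hk
    linear_combination σ * hk - kbar₂Num a β β₁ β₂ * hσ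
  rw [← hs] at hP hder
  have hId := sq_mul_kbar₂Num (β₁ := β₁) hs (by linear_combination hP)
    (sq_mul_eq_of_mul_deriv_eq hs0.ne' hc hP hder)
  have h : (-8 * c * s ^ 3) * (5 * s ^ 2 + 6 * c * s + c ^ 2 - a ^ 4 + 2 * σ * c₂ * c * a ^ 2) =
      0 := by
    linear_combination a ^ 2 * hN - hId
  have h' := (mul_eq_zero.mp h).resolve_left (by positivity)
  linear_combination 5 * h'

theorem stmt_1_general (I : Set ℝ) (hI : ∃ lo hi : ℝ, I = Set.Ioo lo hi)
    (a σ : ℝ) (hσ : σ = -1 ∨ σ = 1)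
    (b b' b'' : ℝ → ℝ)
    (hd1 : ∀ t ∈ I, HasDerivAt b (b' t) t)
    (hd2 : ∀ t ∈ I, HasDerivAt b' (b'' t) t)
    (hpos : ∀ t ∈ I, a ^ 4 + (b t) ^ 2 > 0)
    (hng : ∀ t ∈ I, -2 * (a ^ 4 + (b t) ^ 2) + a * b' t ≠ 0)
    (k₁ k₂ : ℝ → ℝ)
    (hk₁ : ∀ t ∈ I, k₁ t =
      σ * (-2 * (a ^ 4 + (b t) ^ 2) + a * b' t) / (2 * Real.sqrt (a ^ 4 + (b t) ^ 2)))
    (hk₂ : ∀ t ∈ I, k₂ t =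
      σ * ((a ^ 4 + (b t) ^ 2) *
            (8 * b t * b'' t + 20 * a ^ 3 * b' t - 8 * a ^ 6 - 8 * a ^ 2 * (b t) ^ 2)
          - a * (b' t) ^ 3 - 2 * (3 * a ^ 4 + 7 * (b t) ^ 2) * (b' t) ^ 2) /
        (4 * Real.sqrt (a ^ 4 + (b t) ^ 2) *
          (-2 * (a ^ 4 + (b t) ^ 2) + a * b' t) ^ 2)) :
    (((∃ c₁ : ℝ, ∀ t ∈ I, k₁ t = c₁) ∧ (∃ c₂ : ℝ, ∀ t ∈ I, k₂ t = c₂)) ↔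
      (∃ c : ℝ, ∀ t ∈ I, b t = c)) ∧
    (∀ b₀ : ℝ, (∀ t ∈ I, b t = b₀) →
      ∀ t ∈ I, k₁ t = -σ * Real.sqrt (a ^ 4 + b₀ ^ 2) ∧
        k₂ t = -σ * a ^ 2 / (2 * Real.sqrt (a ^ 4 + b₀ ^ 2))) := by
  obtain ⟨lo, hi, rfl⟩ := hI
  have hσ2 : σ ^ 2 = 1 := by rcases hσ with rfl | rfl <;> norm_num
  have hconst : ∀ b₀ : ℝ, (∀ t ∈ Ioo lo hi, b t = b₀) → ∀ t ∈ Ioo lo hi,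
      k₁ t = -σ * Real.sqrt (a ^ 4 + b₀ ^ 2) ∧
        k₂ t = -σ * a ^ 2 / (2 * Real.sqrt (a ^ 4 + b₀ ^ 2)) := by
    intro b₀ hb t ht
    have hb' : ∀ t ∈ Ioo lo hi, b' t = 0 := fun t ht =>
      (hd1 t ht).eq_zero_of_eqOn_const isOpen_Ioo ht hb
    have hb'' : b'' t = 0 := (hd2 t ht).eq_zero_of_eqOn_const isOpen_Ioo ht hb'
    rw [hk₁ t ht, hk₂ t ht, hb t ht, hb' t ht, hb'']
    exact ⟨kbar₁_zero σ a b₀, kbar₂_zero σ a b₀⟩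
  refine ⟨⟨?_, fun ⟨c, hc⟩ => ⟨⟨_, fun t ht => (hconst c hc t ht).1⟩,
    ⟨_, fun t ht => (hconst c hc t ht).2⟩⟩⟩, hconst⟩
  rintro ⟨⟨c₁, hc₁⟩, ⟨c₂, hc₂⟩⟩
  have hP : ∀ t ∈ Ioo lo hi,
      a * b' t - 2 * (a ^ 4 + b t ^ 2) = 2 * (σ * c₁) * Real.sqrt (a ^ 4 + b t ^ 2) :=
    fun t ht => sub_eq_mul_sqrt_of_kbar₁_eq hσ2 (hpos t ht) ((hk₁ t ht).symm.trans (hc₁ t ht))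
  have hder := sq_relation_differentiated isOpen_Ioo hd1 hd2 (c := σ * c₁) fun t ht => by
    rw [hP t ht, mul_pow, mul_pow, Real.sq_sqrt (hpos t ht).le]; ring
  have hsq : ∀ t ∈ Ioo lo hi, (5 * Real.sqrt (a ^ 4 + b t ^ 2) + 3 * (σ * c₁)) ^ 2 =
      5 * a ^ 4 + 4 * (σ * c₁) ^ 2 - 10 * σ * c₂ * (σ * c₁) * a ^ 2 := fun t ht =>
    sq_five_mul_sqrt_add_eq hσ2 (hpos t ht) (hng t ht) (hP t ht) (hder t ht)
      ((hk₂ t ht).symm.trans (hc₂ t ht))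
  have hb : ContinuousOn b (Ioo lo hi) := fun t ht => (hd1 t ht).continuousAt.continuousWithinAt
  obtain ⟨d, hd⟩ := isPreconnected_Ioo.exists_forall_eq_of_sq_eq (by fun_prop) hsq
  refine isPreconnected_Ioo.exists_forall_eq_of_sq_eq hb
    (d := ((d - 3 * (σ * c₁)) / 5) ^ 2 - a ^ 4) fun t ht => ?_
  have hs : Real.sqrt (a ^ 4 + b t ^ 2) = (d - 3 * (σ * c₁)) / 5 := by linarith [hd t ht]
  rw [← hs, Real.sq_sqrt (hpos t ht).le]
  ring

/-- Theorem 3.11 (analytic content): the curvatures `k̄₁` and `k̄₂` of the framed null slant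
curve are both constant iff `b` is constant, and for constant `b = b₀` they take the values
(3.35) and (3.36). -/
theorem stmt_1 (I : Set ℝ) (hI : ∃ lo hi : ℝ, I = Set.Ioo lo hi) (hne : I.Nonempty)
    (a σ : ℝ) (hσ : σ = -1 ∨ σ = 1)
    (b b' b'' : ℝ → ℝ)
    (hd1 : ∀ t ∈ I, HasDerivAt b (b' t) t)
    (hd2 : ∀ t ∈ I, HasDerivAt b' (b'' t) t)
    (hpos : ∀ t ∈ I, a ^ 4 + (b t) ^ 2 > 0)
    (hng : ∀ t ∈ I, -2 * (a ^ 4 + (b t) ^ 2) + a * b' t ≠ 0)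
    (k₁ k₂ : ℝ → ℝ)
    (hk₁ : ∀ t ∈ I, k₁ t =
      σ * (-2 * (a ^ 4 + (b t) ^ 2) + a * b' t) / (2 * Real.sqrt (a ^ 4 + (b t) ^ 2)))
    (hk₂ : ∀ t ∈ I, k₂ t =
      σ * ((a ^ 4 + (b t) ^ 2) *
            (8 * b t * b'' t + 20 * a ^ 3 * b' t - 8 * a ^ 6 - 8 * a ^ 2 * (b t) ^ 2)
          - a * (b' t) ^ 3 - 2 * (3 * a ^ 4 + 7 * (b t) ^ 2) * (b' t) ^ 2) /
        (4 * Real.sqrt (a ^ 4 + (b t) ^ 2) *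
          (-2 * (a ^ 4 + (b t) ^ 2) + a * b' t) ^ 2)) :
    (((∃ c₁ : ℝ, ∀ t ∈ I, k₁ t = c₁) ∧ (∃ c₂ : ℝ, ∀ t ∈ I, k₂ t = c₂)) ↔
      (∃ c : ℝ, ∀ t ∈ I, b t = c)) ∧
    (∀ b₀ : ℝ, (∀ t ∈ I, b t = b₀) →
      ∀ t ∈ I, k₁ t = -σ * Real.sqrt (a ^ 4 + b₀ ^ 2) ∧
        k₂ t = -σ * a ^ 2 / (2 * Real.sqrt (a ^ 4 + b₀ ^ 2))) :=
  stmt_1_general I hI a σ hσ b b' b'' hd1 hd2 hpos hng k₁ k₂ hk₁ hk₂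
end

section
/- Let I ⊆ ℝ be a nonempty open interval, let a, C₁ ∈ ℝ, and let f : I → ℝ be differentiable with a⁴ + f(t) > 0 for all t ∈ I. If f′(t) · (5·√(a⁴ + f(t)) + 3·C₁) = 0 for all t ∈ I, then f is constant on I. -/
/-!
Put `V = 5√(a⁴ + f) + 3C₁`. Since `V' = 5f'/(2√(a⁴ + f))`, the hypothesis says `V · V' = 0`, so
`V²` has zero derivative and is constant on the interval. A continuous function with constant
square on a connected set takes values in a two-point (discrete) set, hence is constant; so `V`,
and with it `f = ((V - 3C₁)/5)² - a⁴`, is constant.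
-/

open Set

theorem IsPreconnected.exists_const_of_sq_const {α 𝕜 : Type*} [TopologicalSpace α]
    [TopologicalSpace 𝕜] [T1Space 𝕜] [CommRing 𝕜] [NoZeroDivisors 𝕜] {S : Set α} {g : α → 𝕜}
    {c : 𝕜} (hS : IsPreconnected S) (hg : ContinuousOn g S) (hsq : ∀ x ∈ S, g x ^ 2 = c) :
    ∃ b, ∀ x ∈ S, g x = b := by
  rcases S.eq_empty_or_nonempty with rfl | ⟨x₀, hx₀⟩
  · exact ⟨0, by simp⟩
  have hmaps : MapsTo g S {g x₀, -g x₀} := fun x hx => by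
    simpa using sq_eq_sq_iff_eq_or_eq_neg.mp ((hsq x hx).trans (hsq x₀ hx₀).symm)
  obtain ⟨b, -, hb⟩ := hS.eqOn_const_of_mapsTo (toFinite _).isDiscrete hg hmaps
    (insert_nonempty _ _)
  exact ⟨b, hb⟩

theorem IsOpen.exists_const_of_mul_hasDerivAt_eq_zero {𝕜 : Type*} [RCLike 𝕜] {S : Set 𝕜}
    (hSo : IsOpen S) (hS : IsPreconnected S) {g g' : 𝕜 → 𝕜}
    (hd : ∀ t ∈ S, HasDerivAt g (g' t) t) (h : ∀ t ∈ S, g' t * g t = 0) :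
    ∃ b, ∀ t ∈ S, g t = b := by
  have hsq : ∀ t ∈ S, HasDerivAt (fun x => g x ^ 2) 0 t := fun t ht => by
    simpa [mul_assoc, mul_comm (g t), h t ht] using (hd t ht).fun_pow 2
  obtain ⟨c, hc⟩ := hSo.exists_is_const_of_deriv_eq_zero hS
    (fun t ht => (hsq t ht).differentiableAt.differentiableWithinAt)
    (fun t ht => (hsq t ht).deriv)
  exact hS.exists_const_of_sq_const (fun t ht => (hd t ht).continuousAt.continuousWithinAt) hc

theorem stmt_2_general (I : Set ℝ) (hI : ∃ lo hi : ℝ, I = Set.Ioo lo hi)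
    (a C₁ : ℝ) (f f' : ℝ → ℝ)
    (hd : ∀ t ∈ I, HasDerivAt f (f' t) t)
    (hpos : ∀ t ∈ I, a ^ 4 + f t > 0)
    (hzero : ∀ t ∈ I, f' t * (5 * Real.sqrt (a ^ 4 + f t) + 3 * C₁) = 0) :
    ∃ c : ℝ, ∀ t ∈ I, f t = c := by
  obtain ⟨lo, hi, rfl⟩ := hI
  have hV : ∀ t ∈ Ioo lo hi, HasDerivAt (fun s => 5 * √(a ^ 4 + f s) + 3 * C₁)
      (5 * (f' t / (2 * √(a ^ 4 + f t)))) t := fun t ht =>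
    ((((hd t ht).const_add _).sqrt (hpos t ht).ne').const_mul 5).add_const _
  obtain ⟨b, hb⟩ := isOpen_Ioo.exists_const_of_mul_hasDerivAt_eq_zero isPreconnected_Ioo hV
    fun t ht => calc
      _ = 5 * (f' t * (5 * √(a ^ 4 + f t) + 3 * C₁)) / (2 * √(a ^ 4 + f t)) := by ring
      _ = 0 := by rw [hzero t ht]; simp
  refine ⟨((b - 3 * C₁) / 5) ^ 2 - a ^ 4, fun t ht => ?_⟩
  have hsqrt : √(a ^ 4 + f t) = (b - 3 * C₁) / 5 := by linarith [hb t ht]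
  rw [← hsqrt, Real.sq_sqrt (hpos t ht).le]
  ring

/-- Equation (3.34) in the proof of Theorem 3.11: if `f' · (5√(a⁴ + f) + 3C₁) = 0` on a
nonempty open interval on which `a⁴ + f > 0`, then `f` is constant there. -/
theorem stmt_2 (I : Set ℝ) (hI : ∃ lo hi : ℝ, I = Set.Ioo lo hi) (hne : I.Nonempty)
    (a C₁ : ℝ) (f f' : ℝ → ℝ)
    (hd : ∀ t ∈ I, HasDerivAt f (f' t) t)
    (hpos : ∀ t ∈ I, a ^ 4 + f t > 0)
    (hzero : ∀ t ∈ I, f' t * (5 * Real.sqrt (a ^ 4 + f t) + 3 * C₁) = 0) :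
    ∃ c : ℝ, ∀ t ∈ I, f t = c :=
  stmt_2_general I hI a C₁ f f' hd hpos hzero
end

section
/- Let x₁, x₂, x₃ ∈ ℝ with x₃ ≠ 0, and let A = !![0, −x₃, x₂; x₃, 0, −x₁; 0, 0, 0] be a 3×3 real matrix. Then the matrix exponential exp(A) equals !![cos x₃, −sin x₃, (x₁/x₃)·(1 − cos x₃) + (x₂/x₃)·sin x₃; sin x₃, cos x₃, (x₂/x₃)·(1 − cos x₃) − (x₁/x₃)·sin x₃; 0, 0, 1]. -/
/-!
Writing `A = x₃ • J`, the matrix `J` satisfies `J ^ 3 = -J` (it generates rotations of the plane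
about a fixed point). Hence the even and odd parts of the exponential series of `t • J` are the
cosine and sine series times `J ^ 2` and `J`, which gives Rodrigues' formula
`exp (t • J) = 1 + sin t • J + (1 - cos t) • J ^ 2`; expanding it entrywise at `t = x₃` is the claim.
-/

open NormedSpace Nat

section PowThree

variable {R : Type*} [Ring R] {J : R}

theorem pow_add_three_of_pow_three_eq_neg (hJ : J ^ 3 = -J) (k : ℕ) :
    J ^ (k + 3) = -J ^ (k + 1) := by
  rw [pow_add, hJ, mul_neg, ← pow_succ]

theorem pow_odd_of_pow_three_eq_neg (hJ : J ^ 3 = -J) (n : ℕ) :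
    J ^ (2 * n + 1) = (-1) ^ n * J := by
  induction n with
  | zero => simp
  | succ n ih =>
    rw [show 2 * (n + 1) + 1 = 2 * n + 3 by ring, pow_add_three_of_pow_three_eq_neg hJ, ih,
      pow_succ (-1 : R), mul_neg_one, neg_mul]

theorem pow_even_of_pow_three_eq_neg (hJ : J ^ 3 = -J) (n : ℕ) :
    J ^ (2 * (n + 1)) = (-1) ^ n * J ^ 2 := by
  induction n with
  | zero => simp
  | succ n ih =>
    rw [show 2 * (n + 1 + 1) = (2 * n + 1) + 3 by ring, pow_add_three_of_pow_three_eq_neg hJ,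
      show 2 * n + 1 + 1 = 2 * (n + 1) by ring, ih, pow_succ (-1 : R), mul_neg_one, neg_mul]

end PowThree

section Rodrigues

variable {𝔸 : Type*} [Ring 𝔸] [Algebra ℝ 𝔸]

theorem neg_one_pow_mul_eq_smul (n : ℕ) (a : 𝔸) : (-1 : 𝔸) ^ n * a = ((-1 : ℝ) ^ n) • a := by
  simp [Algebra.smul_def]

variable [TopologicalSpace 𝔸] [IsTopologicalRing 𝔸] [ContinuousSMul ℝ 𝔸] [T2Space 𝔸]

theorem exp_smul_of_pow_three_eq_neg {J : 𝔸} (hJ : J ^ 3 = -J) (t : ℝ) :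
    exp (t • J) = 1 + Real.sin t • J + (1 - Real.cos t) • J ^ 2 := by
  rw [exp_eq_tsum ℝ, show 1 + Real.sin t • J + (1 - Real.cos t) • J ^ 2 =
    (Real.cos t • -J ^ 2 + (1 + J ^ 2)) + Real.sin t • J by module]
  refine HasSum.tsum_eq (HasSum.even_add_odd ?_ ?_)
  · -- the constant term `1` is the only even term not of the form `c • (-J ^ 2)`
    convert ((Real.hasSum_cos t).smul_const (-J ^ 2)).add (hasSum_ite_eq 0 (1 + J ^ 2)) with n
    rcases n with _ | n
    · simp
    · rw [if_neg n.succ_ne_zero, add_zero, smul_pow, pow_even_of_pow_three_eq_neg hJ,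
        neg_one_pow_mul_eq_smul, smul_smul, smul_smul, smul_neg, ← neg_smul]
      congr 1
      rw [pow_succ]
      ring
  · convert (Real.hasSum_sin t).smul_const J using 2 with n
    rw [smul_pow, pow_odd_of_pow_three_eq_neg hJ, neg_one_pow_mul_eq_smul, smul_smul, smul_smul]
    congr 1
    ring

end Rodrigues

theorem pow_three_planarMotionGenerator (a b : ℝ) :
    (!![0, -1, a; 1, 0, b; 0, 0, 0] : Matrix (Fin 3) (Fin 3) ℝ) ^ 3 =
      -!![0, -1, a; 1, 0, b; 0, 0, 0] := by
  rw [pow_succ, sq]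
  ext i j
  fin_cases i <;> fin_cases j <;> simp [Matrix.mul_apply, Fin.sum_univ_three]

/-- Equation (5.10) of Section 6: the matrix exponential of the matrix `A` of `ad_X`. -/
theorem stmt_8 (x₁ x₂ x₃ : ℝ) (h : x₃ ≠ 0) :
    NormedSpace.exp (!![0, -x₃, x₂; x₃, 0, -x₁; 0, 0, 0] : Matrix (Fin 3) (Fin 3) ℝ) =
      !![Real.cos x₃, -Real.sin x₃,
           (x₁ / x₃) * (1 - Real.cos x₃) + (x₂ / x₃) * Real.sin x₃;
         Real.sin x₃, Real.cos x₃,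
           (x₂ / x₃) * (1 - Real.cos x₃) - (x₁ / x₃) * Real.sin x₃;
         0, 0, 1] := by
  have hA : (!![0, -x₃, x₂; x₃, 0, -x₁; 0, 0, 0] : Matrix (Fin 3) (Fin 3) ℝ) =
      x₃ • !![0, -1, x₂ / x₃; 1, 0, -(x₁ / x₃); 0, 0, 0] := by
    simp [Matrix.smul_of, mul_div_cancel₀ _ h]
  rw [hA, exp_smul_of_pow_three_eq_neg (pow_three_planarMotionGenerator _ _), sq]
  ext i j
  fin_cases i <;> fin_cases j <;> simp [Matrix.one_fin_three] <;> ring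
end

section
/- Let I ⊆ ℝ be a nonempty open interval, a ∈ ℝ, and b : I → ℝ differentiable with a⁴ + b(t)² > 0 for all t ∈ I. Define α(t) = −b(t)·(−2·(a⁴ + b(t)²) + a·b′(t))/(2·(a⁴ + b(t)²)), β(t) = b(t)·b′(t)/(2·(a⁴ + b(t)²)), γ(t) = a·(−2·(a⁴ + b(t)²) + a·b′(t))/(2·(a⁴ + b(t)²)). Then (α(t) = 0 and β(t) = 0 and γ(t) = 1 for all t ∈ I) if and only if (b(t) = 0 for all t ∈ I and a = −1). -/
/-!
Where `b ≠ 0` the denominator is positive, so `β = 0` forces `b' = 0`, and then `α = b ≠ 0`;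
hence `α ≡ β ≡ 0` gives `b ≡ 0` on `I`. Since `I` is open, `b ≡ 0` there forces `b' ≡ 0`,
and then `γ = a · (-2a⁴) / (2a⁴)`, which is `-a` for `a ≠ 0` and `0` (division by zero) for
`a = 0`; so `γ ≡ 1` iff `a = -1`.
-/

theorem HasDerivAt.eq_zero_of_eqOn_zero {𝕜 F : Type*} [NontriviallyNormedField 𝕜]
    [NormedAddCommGroup F] [NormedSpace 𝕜 F] {f : 𝕜 → F} {f' : F} {s : Set 𝕜} {x : 𝕜}
    (hf : HasDerivAt f f' x) (hs : IsOpen s) (hfs : Set.EqOn f 0 s) (hx : x ∈ s) : f' = 0 :=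
  hf.unique <| (hasDerivAt_const x 0).congr_of_eventuallyEq <|
    Filter.eventuallyEq_of_mem (hs.mem_nhds hx) hfs

noncomputable section SlantCoefficients

/-- The coefficients (3.7)–(3.9) of `∇_Ċ Ċ = αξ + βĊ + γφĊ`, in terms of `a = η(Ċ)`,
`b = g(Ċ, φĊ)` and `b'`. -/
def slantAlpha (a b b' : ℝ) : ℝ :=
  -b * (-2 * (a ^ 4 + b ^ 2) + a * b') / (2 * (a ^ 4 + b ^ 2))

def slantBeta (a b b' : ℝ) : ℝ :=
  b * b' / (2 * (a ^ 4 + b ^ 2))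

def slantGamma (a b b' : ℝ) : ℝ :=
  a * (-2 * (a ^ 4 + b ^ 2) + a * b') / (2 * (a ^ 4 + b ^ 2))

theorem eq_zero_of_slantAlpha_eq_zero_of_slantBeta_eq_zero {a b b' : ℝ}
    (hα : slantAlpha a b b' = 0) (hβ : slantBeta a b b' = 0) : b = 0 := by
  by_contra hb
  have hD : 2 * (a ^ 4 + b ^ 2) ≠ 0 := by positivity
  have hb' : b' = 0 := by
    simpa [slantBeta, hD, hb] using hβ
  have hα_eq : slantAlpha a b b' = b := by
    rw [slantAlpha, hb']
    field_simp
    ring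
  exact hb (hα_eq ▸ hα)

theorem slantAlpha_zero (a b' : ℝ) : slantAlpha a 0 b' = 0 := by
  simp [slantAlpha]

theorem slantBeta_zero (a b' : ℝ) : slantBeta a 0 b' = 0 := by
  simp [slantBeta]

theorem slantGamma_zero_zero_eq_one_iff {a : ℝ} : slantGamma a 0 0 = 1 ↔ a = -1 := by
  rcases eq_or_ne a 0 with rfl | ha
  · norm_num [slantGamma]
  · have hγ : slantGamma a 0 0 = -a := by
      rw [slantGamma]
      field_simp
      ring
    rw [hγ, neg_eq_iff_eq_neg]

end SlantCoefficients

theorem stmt_11_general (I : Set ℝ) (hI : ∃ lo hi : ℝ, I = Set.Ioo lo hi) (hne : I.Nonempty)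
    (a : ℝ) (b b' : ℝ → ℝ)
    (hd : ∀ t ∈ I, HasDerivAt b (b' t) t)
    (α β γ : ℝ → ℝ)
    (hα : ∀ t ∈ I, α t =
      -b t * (-2 * (a ^ 4 + (b t) ^ 2) + a * b' t) / (2 * (a ^ 4 + (b t) ^ 2)))
    (hβ : ∀ t ∈ I, β t = b t * b' t / (2 * (a ^ 4 + (b t) ^ 2)))
    (hγ : ∀ t ∈ I, γ t =
      a * (-2 * (a ^ 4 + (b t) ^ 2) + a * b' t) / (2 * (a ^ 4 + (b t) ^ 2))) :
    (∀ t ∈ I, α t = 0 ∧ β t = 0 ∧ γ t = 1) ↔ ((∀ t ∈ I, b t = 0) ∧ a = -1) := by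
  have hI_open : IsOpen I := by
    obtain ⟨lo, hi, rfl⟩ := hI
    exact isOpen_Ioo
  have hb'_zero : (∀ t ∈ I, b t = 0) → ∀ t ∈ I, b' t = 0 := fun hb t ht =>
    (hd t ht).eq_zero_of_eqOn_zero hI_open hb ht
  constructor
  · intro h
    have hb : ∀ t ∈ I, b t = 0 := fun t ht =>
      eq_zero_of_slantAlpha_eq_zero_of_slantBeta_eq_zero (a := a) (b' := b' t)
        ((hα t ht).symm.trans (h t ht).1) ((hβ t ht).symm.trans (h t ht).2.1)
    obtain ⟨t, ht⟩ := hne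
    have hγt : slantGamma a (b t) (b' t) = 1 := (hγ t ht).symm.trans (h t ht).2.2
    rw [hb t ht, hb'_zero hb t ht] at hγt
    exact ⟨hb, slantGamma_zero_zero_eq_one_iff.1 hγt⟩
  · rintro ⟨hb, rfl⟩ t ht
    rw [hα t ht, hβ t ht, hγ t ht, hb t ht, hb'_zero hb t ht]
    exact ⟨slantAlpha_zero _ _, slantBeta_zero _ _, slantGamma_zero_zero_eq_one_iff.2 rfl⟩

/-- Proposition 3.14(i) (computational content): the coefficients (3.7)–(3.9) satisfy
`α ≡ 0`, `β ≡ 0`, `γ ≡ 1` on `I` iff `b ≡ 0` on `I` and `a = −1`. -/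
theorem stmt_11 (I : Set ℝ) (hI : ∃ lo hi : ℝ, I = Set.Ioo lo hi) (hne : I.Nonempty)
    (a : ℝ) (b b' : ℝ → ℝ)
    (hd : ∀ t ∈ I, HasDerivAt b (b' t) t)
    (hpos : ∀ t ∈ I, a ^ 4 + (b t) ^ 2 > 0)
    (α β γ : ℝ → ℝ)
    (hα : ∀ t ∈ I, α t =
      -b t * (-2 * (a ^ 4 + (b t) ^ 2) + a * b' t) / (2 * (a ^ 4 + (b t) ^ 2)))
    (hβ : ∀ t ∈ I, β t = b t * b' t / (2 * (a ^ 4 + (b t) ^ 2)))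
    (hγ : ∀ t ∈ I, γ t =
      a * (-2 * (a ^ 4 + (b t) ^ 2) + a * b' t) / (2 * (a ^ 4 + (b t) ^ 2))) :
    (∀ t ∈ I, α t = 0 ∧ β t = 0 ∧ γ t = 1) ↔ ((∀ t ∈ I, b t = 0) ∧ a = -1) :=
  stmt_11_general I hI hne a b b' hd α β γ hα hβ hγ
end
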